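/- Let γ' = (γ'_1,...,γ'_m) with γ'_j = 1 for j = 1,...,ν and γ'_j > 1 for j = ν+1,...,m, let α > 0, and let τ̄ = (τ_1,...,τ_m) with 1 ≤ τ_j < ∞. For n ∈ ℕ set ϰ(n) = { s ∈ ℤ_+^m : s_1 + ... + s_m = n }. Then the mixed ℓ_τ̄-norm of the sequence { 2^{-α⟨s,γ'⟩} }_{s ∈ ϰ(n)} (extended by zero off ϰ(n)) satisfies ‖{2^{-α⟨s,γ'⟩}}_{s∈ϰ(n)}‖_{ℓ_τ̄} ≍ 2^{-nα} · n^{Σ_{j=2}^ν 1/τ_j}, with implied constants independent of n. -/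

import Mathlib

open scoped BigOperators ENNReal
open MeasureTheory Real Set

noncomputable section

/-- Iterated mixed sequence norm: `ℓ_{τ_1}` in the first index, then `ℓ_{τ_2}`, etc. -/
def mixedSeqNorm : (m : ℕ) → (Fin m → ℝ) → ((Fin m → ℕ) → ℝ) → ℝ
  | 0, _, a => |a (fun i => i.elim0)|
  | m + 1, τ, a =>
      mixedSeqNorm m (fun j => τ j.succ)
        (fun s => (∑' k : ℕ, |a (Fin.cons k s)| ^ (τ 0)) ^ (1 / τ 0))

/-- `(2^{-s_1},...,2^{-s_m})`. -/
def negTwoPow {m : ℕ} (s : Fin m → ℕ) : Fin m → ℝ := fun j => (2 : ℝ) ^ (-(s j : ℝ))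

/-- `Γ(Ω,N) = { s : Ω(2^{-s}) ≥ 1/N }`. -/
def Gam {m : ℕ} (Ω : (Fin m → ℝ) → ℝ) (N : ℝ) : Set (Fin m → ℕ) :=
  {s | 1 / N ≤ Ω (negTwoPow s)}

/-- `Γ^⊥(Ω,N)`, the complement of `Γ(Ω,N)` in `ℤ_+^m`. -/
def GamPerp {m : ℕ} (Ω : (Fin m → ℝ) → ℝ) (N : ℝ) : Set (Fin m → ℕ) :=
  (Gam Ω N)ᶜ

/-- `Λ(Ω,N) = Γ^⊥(Ω,N) \ Γ^⊥(Ω,2^l N)`. -/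
def Lam {m : ℕ} (Ω : (Fin m → ℝ) → ℝ) (l : ℕ) (N : ℝ) : Set (Fin m → ℕ) :=
  GamPerp Ω N \ GamPerp Ω (2 ^ l * N)

/-- A function of mixed modulus-of-continuity type of order `l`. -/
structure IsMixedModulus {m : ℕ} (l : ℕ) (Ω : (Fin m → ℝ) → ℝ) : Prop where
  pos : ∀ t : Fin m → ℝ, (∀ j, 0 < t j) → 0 < Ω t
  zero : ∀ t : Fin m → ℝ, (∃ j, t j = 0) → Ω t = 0
  mono : ∀ t₁ t₂ : Fin m → ℝ, (∀ j, t₁ j ≤ t₂ j) → Ω t₁ ≤ Ω t₂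
  submul : ∀ (k : Fin m → ℕ) (t : Fin m → ℝ), (∀ j, 1 ≤ k j) →
      Ω (fun j => (k j : ℝ) * t j) ≤ (∏ j, (k j : ℝ)) ^ l * Ω t
  cont : ContinuousOn Ω {t | ∀ j, 0 < t j}

/-- `t^{-α_j} Ω` almost increases in each variable on `(0,1]^m`. -/
def AlmostIncrOn {m : ℕ} (Ω : (Fin m → ℝ) → ℝ) (α : Fin m → ℝ) : Prop :=
  ∀ j, ∃ C : ℝ, 1 ≤ C ∧ ∀ t : Fin m → ℝ, (∀ i, t i ∈ Set.Ioc (0:ℝ) 1) →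
    ∀ t₁ t₂ : ℝ, t₁ ∈ Set.Ioc (0:ℝ) 1 → t₂ ∈ Set.Ioc (0:ℝ) 1 → t₁ ≤ t₂ →
      t₁ ^ (-(α j)) * Ω (Function.update t j t₁) ≤
        C * (t₂ ^ (-(α j)) * Ω (Function.update t j t₂))

/-- `t^{-α_j} Ω` almost decreases in each variable on `(0,1]^m`. -/
def AlmostDecrOn {m : ℕ} (Ω : (Fin m → ℝ) → ℝ) (α : Fin m → ℝ) : Prop :=
  ∀ j, ∃ C : ℝ, 1 ≤ C ∧ ∀ t : Fin m → ℝ, (∀ i, t i ∈ Set.Ioc (0:ℝ) 1) →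
    ∀ t₁ t₂ : ℝ, t₁ ∈ Set.Ioc (0:ℝ) 1 → t₂ ∈ Set.Ioc (0:ℝ) 1 → t₁ ≤ t₂ →
      t₂ ^ (-(α j)) * Ω (Function.update t j t₂) ≤
        C * (t₁ ^ (-(α j)) * Ω (Function.update t j t₁))

/-- Condition (S). -/
def CondS {m : ℕ} (Ω : (Fin m → ℝ) → ℝ) : Prop :=
  ∃ α : Fin m → ℝ, (∀ j, α j ∈ Set.Ioo (0:ℝ) 1) ∧ AlmostIncrOn Ω α

/-- Condition (S_l). -/
def CondSl {m : ℕ} (l : ℕ) (Ω : (Fin m → ℝ) → ℝ) : Prop :=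
  ∃ α : Fin m → ℝ, (∀ j, α j ∈ Set.Ioo (0:ℝ) (l : ℝ)) ∧ AlmostDecrOn Ω α

/-- The fundamental cube `(0, 2π]^m`. -/
def cube (m : ℕ) : Set (Fin m → ℝ) := Set.univ.pi fun _ => Set.Ioc 0 (2 * π)

/-- `e^{i⟨k,x⟩}`. -/
def expk {m : ℕ} (k : Fin m → ℤ) (x : Fin m → ℝ) : ℂ :=
  Complex.exp (Complex.I * ∑ j, (k j : ℂ) * (x j : ℂ))

/-- Fourier coefficient of a `2π`-periodic function of `m` variables. -/
def fCoeff {m : ℕ} (f : (Fin m → ℝ) → ℂ) (n : Fin m → ℤ) : ℂ :=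
  ((1 / (2 * π)) ^ m : ℝ) * ∫ x in cube m, f x * Complex.exp (-(Complex.I * ∑ j, (n j : ℂ) * (x j : ℂ)))

/-- The dyadic block `ρ(s) = { k : 2^{s_j-1} ≤ |k_j| < 2^{s_j} }`. -/
def rho {m : ℕ} (s : Fin m → ℕ) : Set (Fin m → ℤ) :=
  {k | ∀ j, 2 ^ (s j - 1) ≤ (k j).natAbs ∧ (k j).natAbs < 2 ^ (s j)}

/-- The dyadic block of the Fourier series of `f`. -/
def deltaBlock {m : ℕ} (f : (Fin m → ℝ) → ℂ) (s : Fin m → ℕ) : (Fin m → ℝ) → ℂ :=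
  fun x => ∑' k : rho s, fCoeff f k.1 * expk k.1 x

/-- `Q(Ω,N) = ⋃_{s ∈ Γ(Ω,N)} ρ(s)`. -/
def QSet {m : ℕ} (Ω : (Fin m → ℝ) → ℝ) (N : ℝ) : Set (Fin m → ℤ) :=
  ⋃ s ∈ Gam Ω N, rho s

/-- The partial Fourier sum over a set of frequencies. -/
def partialSum {m : ℕ} (E : Set (Fin m → ℤ)) (f : (Fin m → ℝ) → ℂ) : (Fin m → ℝ) → ℂ :=
  fun x => ∑' k : E, fCoeff f k.1 * expk k.1 x

/-- Non-increasing rearrangement of `|g|` on `[0,2π]`. -/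
def rearr (g : ℝ → ℂ) (t : ℝ) : ℝ :=
  sInf {y : ℝ | 0 ≤ y ∧ (volume {x ∈ Set.Ioc (0:ℝ) (2 * π) | y < ‖g x‖}).toReal ≤ t}

/-- One-variable Lorentz norm. -/
def lorentzNorm (p θ : ℝ) (g : ℝ → ℂ) : ℝ :=
  (∫ t in Set.Ioc (0:ℝ) (2 * π), rearr g t ^ θ * t ^ (θ / p - 1)) ^ (1 / θ)

/-- Lorentz mixed norm: one-variable Lorentz norm iterated over the variables. -/
def mixedLorentz : (m : ℕ) → (Fin m → ℝ) → (Fin m → ℝ) → ((Fin m → ℝ) → ℂ) → ℝ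
  | 0, _, _, f => ‖f (fun i => i.elim0)‖
  | m + 1, p, θ, f =>
      mixedLorentz m (fun j => p j.succ) (fun j => θ j.succ)
        (fun x => ((lorentzNorm (p 0) (θ 0) (fun t => f (Fin.cons t x)) : ℝ) : ℂ))

/-- Lebesgue mixed norm. -/
def mixedLp : (m : ℕ) → (Fin m → ℝ) → ((Fin m → ℝ) → ℂ) → ℝ
  | 0, _, f => ‖f (fun i => i.elim0)‖
  | m + 1, p, f =>
      mixedLp m (fun j => p j.succ)
        (fun x => (((∫ t in Set.Ioc (0:ℝ) (2 * π),
            ‖f (Fin.cons t x)‖ ^ (p 0)) ^ (1 / p 0) : ℝ) : ℂ))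

/-- `2π`-periodicity in each variable. -/
def PeriodicAll {m : ℕ} (f : (Fin m → ℝ) → ℂ) : Prop :=
  ∀ (x : Fin m → ℝ) (j : Fin m), f (Function.update x j (x j + 2 * π)) = f x

/-- Zero mean in each variable. -/
def ZeroMeanAll {m : ℕ} (f : (Fin m → ℝ) → ℂ) : Prop :=
  ∀ (x : Fin m → ℝ) (j : Fin m),
    (∫ t in Set.Ioc (0:ℝ) (2 * π), f (Function.update x j t)) = 0

/-- Membership in the generalized Nikol'skii–Besov class with mixed Lebesgue norm. -/
def InBesovLp {m : ℕ} (Ω : (Fin m → ℝ) → ℝ) (p τ : Fin m → ℝ)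
    (f : (Fin m → ℝ) → ℂ) : Prop :=
  Measurable f ∧ PeriodicAll f ∧ ZeroMeanAll f ∧ IntegrableOn f (cube m) ∧
    mixedSeqNorm m τ (fun s => (Ω (negTwoPow s))⁻¹ * mixedLp m p (deltaBlock f s)) ≤ 1

/-- Membership in the generalized Nikol'skii–Besov class with Lorentz mixed norm. -/
def InBesovLorentz {m : ℕ} (Ω : (Fin m → ℝ) → ℝ) (p θ τ : Fin m → ℝ)
    (f : (Fin m → ℝ) → ℂ) : Prop :=
  Measurable f ∧ PeriodicAll f ∧ ZeroMeanAll f ∧ IntegrableOn f (cube m) ∧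
    mixedSeqNorm m τ (fun s => (Ω (negTwoPow s))⁻¹ * mixedLorentz m p θ (deltaBlock f s)) ≤ 1

end

lemma rpow_fsum {ι : Type*} (s : Finset ι) {x : ℝ} (hx : 0 < x) (f : ι → ℝ) :
    x ^ (∑ i ∈ s, f i) = ∏ i ∈ s, x ^ f i := by
  classical
  induction s using Finset.cons_induction with
  | empty => simp
  | cons i s hi ih => rw [Finset.sum_cons, Finset.prod_cons, Real.rpow_add hx, ih]

lemma rpow_rpow_inv' {x t : ℝ} (hx : 0 ≤ x) (ht : t ≠ 0) : (x ^ t) ^ (1/t) = x := by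
  rw [← Real.rpow_mul hx, mul_one_div, div_self ht, Real.rpow_one]

lemma mixedSeqNorm_nonneg : ∀ (m : ℕ) (τ : Fin m → ℝ) (a), 0 ≤ mixedSeqNorm m τ a := by
  intro m
  induction m with
  | zero => intro τ a; exact abs_nonneg _
  | succ m ih => intro τ a; rw [mixedSeqNorm]; exact ih _ _

lemma mixedSeqNorm_prod : ∀ (m : ℕ) (τ : Fin m → ℝ), (∀ j, 0 < τ j) →
    ∀ (c : ℝ), 0 ≤ c → ∀ (g : Fin m → ℕ → ℝ), (∀ j k, 0 ≤ g j k) →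
    (∀ j, Summable fun k => g j k ^ τ j) →
    mixedSeqNorm m τ (fun s => c * ∏ j, g j (s j)) =
      c * ∏ j, (∑' k, g j k ^ τ j) ^ (1 / τ j) := by
  intro m
  induction m with
  | zero =>
    intro τ hτ c hc g hg hs
    simp [mixedSeqNorm, abs_of_nonneg hc]
  | succ m ih =>
    intro τ hτ c hc g hg hs
    rw [mixedSeqNorm]
    have hP : ∀ s : Fin m → ℕ, 0 ≤ ∏ j : Fin m, g j.succ (s j) :=
      fun s => Finset.prod_nonneg fun j _ => hg _ _
    have hS0 : 0 ≤ ∑' k, g 0 k ^ τ 0 := tsum_nonneg fun k => Real.rpow_nonneg (hg _ _) _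
    have key : (fun s : Fin m → ℕ =>
        (∑' k : ℕ, |c * ∏ j : Fin (m+1), g j ((Fin.cons k s : Fin (m+1) → ℕ) j)| ^ τ 0) ^ (1 / τ 0)) =
        fun s => (c * (∑' k, g 0 k ^ τ 0) ^ (1 / τ 0)) * ∏ j : Fin m, g j.succ (s j) := by
      funext s
      have h0 : 0 ≤ c * ∏ j : Fin m, g j.succ (s j) := mul_nonneg hc (hP s)
      have h1 : ∀ k : ℕ, |c * ∏ j : Fin (m+1), g j ((Fin.cons k s : Fin (m+1) → ℕ) j)| ^ τ 0
          = (c * ∏ j : Fin m, g j.succ (s j)) ^ τ 0 * g 0 k ^ τ 0 := by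
        intro k
        rw [Fin.prod_univ_succ]
        simp only [Fin.cons_zero, Fin.cons_succ]
        rw [show c * (g 0 k * ∏ j : Fin m, g j.succ (s j))
              = (c * ∏ j : Fin m, g j.succ (s j)) * g 0 k by ring,
          abs_of_nonneg (mul_nonneg h0 (hg _ _)), Real.mul_rpow h0 (hg _ _)]
      rw [tsum_congr h1, tsum_mul_left,
        Real.mul_rpow (Real.rpow_nonneg h0 _) hS0,
        rpow_rpow_inv' h0 (ne_of_gt (hτ 0))]
      ring
    rw [key, ih (fun j => τ j.succ) (fun j => hτ j.succ)
        (c * (∑' k, g 0 k ^ τ 0) ^ (1 / τ 0))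
        (mul_nonneg hc (Real.rpow_nonneg hS0 _)) (fun j => g j.succ)
        (fun j k => hg j.succ k) (fun j => hs j.succ), Fin.prod_univ_succ]
    ring

lemma mixedSeqNorm_le : ∀ (m : ℕ) (τ : Fin m → ℝ), (∀ j, 0 < τ j) →
    ∀ (a : (Fin m → ℕ) → ℝ) (c : ℝ), 0 ≤ c → ∀ (g : Fin m → ℕ → ℝ), (∀ j k, 0 ≤ g j k) →
    (∀ j, Summable fun k => g j k ^ τ j) →
    (∀ s, |a s| ≤ c * ∏ j, g j (s j)) →
    mixedSeqNorm m τ a ≤ c * ∏ j, (∑' k, g j k ^ τ j) ^ (1 / τ j) := by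
  intro m
  induction m with
  | zero =>
    intro τ hτ a c hc g hg hs hab
    simpa [mixedSeqNorm] using hab (fun i => i.elim0)
  | succ m ih =>
    intro τ hτ a c hc g hg hs hab
    rw [mixedSeqNorm]
    have hP : ∀ s : Fin m → ℕ, 0 ≤ ∏ j : Fin m, g j.succ (s j) :=
      fun s => Finset.prod_nonneg fun j _ => hg _ _
    have hS0 : 0 ≤ ∑' k, g 0 k ^ τ 0 := tsum_nonneg fun k => Real.rpow_nonneg (hg _ _) _
    refine le_trans (ih (fun j => τ j.succ) (fun j => hτ j.succ) _
        (c * (∑' k, g 0 k ^ τ 0) ^ (1 / τ 0))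
        (mul_nonneg hc (Real.rpow_nonneg hS0 _)) (fun j => g j.succ)
        (fun j k => hg j.succ k) (fun j => hs j.succ) ?_) (le_of_eq ?_)
    swap
    · rw [Fin.prod_univ_succ]; ring
    intro s
    have h0 : 0 ≤ c * ∏ j : Fin m, g j.succ (s j) := mul_nonneg hc (hP s)
    have hA0 : (0:ℝ) ≤ (∑' k : ℕ, |a (Fin.cons k s)| ^ τ 0) ^ (1 / τ 0) :=
      Real.rpow_nonneg (tsum_nonneg fun k => Real.rpow_nonneg (abs_nonneg _) _) _
    rw [abs_of_nonneg hA0]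
    -- pointwise bound on summands
    have h1 : ∀ k : ℕ, |a (Fin.cons k s)| ^ τ 0
        ≤ (c * ∏ j : Fin m, g j.succ (s j)) ^ τ 0 * g 0 k ^ τ 0 := by
      intro k
      rw [← Real.mul_rpow h0 (hg _ _)]
      refine Real.rpow_le_rpow (abs_nonneg _) ?_ (le_of_lt (hτ 0))
      calc |a (Fin.cons k s)| ≤ c * ∏ j : Fin (m+1), g j ((Fin.cons k s : Fin (m+1) → ℕ) j) :=
            hab _
        _ = c * (∏ j : Fin m, g j.succ (s j)) * g 0 k := by
            rw [Fin.prod_univ_succ]; simp only [Fin.cons_zero, Fin.cons_succ]; ring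
    have hsum2 : Summable fun k : ℕ => (c * ∏ j : Fin m, g j.succ (s j)) ^ τ 0 * g 0 k ^ τ 0 :=
      (hs 0).mul_left _
    have hsum1 : Summable fun k : ℕ => |a (Fin.cons k s)| ^ τ 0 :=
      Summable.of_nonneg_of_le (fun k => Real.rpow_nonneg (abs_nonneg _) _) h1 hsum2
    have h2 : (∑' k : ℕ, |a (Fin.cons k s)| ^ τ 0)
        ≤ (c * ∏ j : Fin m, g j.succ (s j)) ^ τ 0 * ∑' k, g 0 k ^ τ 0 := by
      rw [← tsum_mul_left]
      exact Summable.tsum_le_tsum h1 hsum1 hsum2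
    calc (∑' k : ℕ, |a (Fin.cons k s)| ^ τ 0) ^ (1 / τ 0)
        ≤ ((c * ∏ j : Fin m, g j.succ (s j)) ^ τ 0 * ∑' k, g 0 k ^ τ 0) ^ (1 / τ 0) :=
          Real.rpow_le_rpow (tsum_nonneg fun k => Real.rpow_nonneg (abs_nonneg _) _) h2
            (le_of_lt (by rw [one_div]; exact inv_pos.mpr (hτ 0)))
      _ = c * (∑' k, g 0 k ^ τ 0) ^ (1 / τ 0) * ∏ j : Fin m, g j.succ (s j) := by
          rw [Real.mul_rpow (Real.rpow_nonneg h0 _) hS0, rpow_rpow_inv' h0 (ne_of_gt (hτ 0))]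
          ring

lemma mixedSeqNorm_mono : ∀ (m : ℕ) (τ : Fin m → ℝ), (∀ j, 0 < τ j) →
    ∀ (a b : (Fin m → ℕ) → ℝ), (Function.support a).Finite →
    (∀ s, 0 ≤ b s) → (∀ s, b s ≤ |a s|) →
    mixedSeqNorm m τ b ≤ mixedSeqNorm m τ a := by
  intro m
  induction m with
  | zero =>
    intro τ hτ a b hfin hb hba
    simp only [mixedSeqNorm]
    calc |b fun i => i.elim0| = b (fun i => i.elim0) := abs_of_nonneg (hb _)
      _ ≤ |a fun i => i.elim0| := hba _
  | succ m ih =>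
    intro τ hτ a b hfin hb hba
    rw [mixedSeqNorm, mixedSeqNorm]
    have habs : ∀ s : Fin (m+1) → ℕ, |a s| ^ τ 0 ≠ 0 → a s ≠ 0 := by
      intro s h hz
      apply h
      rw [hz, abs_zero, Real.zero_rpow (ne_of_gt (hτ 0))]
    have hinj : ∀ s : Fin m → ℕ, Function.Injective (fun k : ℕ => (Fin.cons k s : Fin (m+1) → ℕ)) := by
      intro s x y h
      have := congrArg (fun f : Fin (m+1) → ℕ => f 0) h
      simpa using this
    have hsa : ∀ s : Fin m → ℕ, Summable fun k : ℕ => |a (Fin.cons k s)| ^ τ 0 := by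
      intro s
      apply summable_of_finite_support
      refine Set.Finite.subset (hfin.preimage ((hinj s).injOn)) ?_
      intro k hk
      exact habs _ hk
    have hsb : ∀ s : Fin m → ℕ, Summable fun k : ℕ => |b (Fin.cons k s)| ^ τ 0 := by
      intro s
      refine Summable.of_nonneg_of_le (fun k => Real.rpow_nonneg (abs_nonneg _) _) ?_ (hsa s)
      intro k
      exact Real.rpow_le_rpow (abs_nonneg _) (by rw [abs_of_nonneg (hb _)]; exact hba _)
        (le_of_lt (hτ 0))
    refine ih (fun j => τ j.succ) (fun j => hτ j.succ) _ _ ?_ ?_ ?_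
    · -- support of A finite
      refine Set.Finite.subset (hfin.image Fin.tail) ?_
      intro s hs
      simp only [Function.mem_support] at hs
      by_contra hmem
      apply hs
      have hz : ∀ k : ℕ, a (Fin.cons k s) = 0 := by
        intro k
        by_contra hk
        exact hmem ⟨Fin.cons k s, hk, by rw [Fin.tail_cons]⟩
      have : (∑' k : ℕ, |a (Fin.cons k s)| ^ τ 0) = 0 := by
        simp [hz, Real.zero_rpow (ne_of_gt (hτ 0))]
      rw [this, Real.zero_rpow]
      simp [ne_of_gt (hτ 0)]
    · intro s
      exact Real.rpow_nonneg (tsum_nonneg fun k => Real.rpow_nonneg (abs_nonneg _) _) _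
    · intro s
      rw [abs_of_nonneg (Real.rpow_nonneg
        (tsum_nonneg fun k => Real.rpow_nonneg (abs_nonneg _) _) _)]
      refine Real.rpow_le_rpow (tsum_nonneg fun k => Real.rpow_nonneg (abs_nonneg _) _)
        (Summable.tsum_le_tsum ?_ (hsb s) (hsa s)) (le_of_lt (by rw [one_div]; exact inv_pos.mpr (hτ 0)))
      intro k
      exact Real.rpow_le_rpow (abs_nonneg _) (by rw [abs_of_nonneg (hb _)]; exact hba _)
        (le_of_lt (hτ 0))


lemma tsum_ind_le (n : ℕ) (t : ℝ) (ht : t ≠ 0) :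
    ∑' k : ℕ, (if k ≤ n then (1:ℝ) else 0) ^ t = ((n+1 : ℕ) : ℝ) := by
  have h1 : ∀ k : ℕ, (if k ≤ n then (1:ℝ) else 0) ^ t = if k ≤ n then 1 else 0 := by
    intro k; split <;> simp [Real.zero_rpow ht]
  rw [tsum_congr h1, tsum_eq_sum (s := Finset.range (n+1))
    (by intro k hk; simp only [Finset.mem_range] at hk; rw [if_neg (by omega)])]
  rw [Finset.sum_congr rfl (fun k hk => by
    simp only [Finset.mem_range] at hk; rw [if_pos (by omega)])]
  simp

lemma tsum_ind0 (t : ℝ) (ht : t ≠ 0) :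
    ∑' k : ℕ, (if k = 0 then (1:ℝ) else 0) ^ t = 1 := by
  rw [tsum_eq_single 0 (by intro k hk; rw [if_neg hk, Real.zero_rpow ht])]
  simp

lemma geom_rpow (β t : ℝ) (k : ℕ) :
    ((2:ℝ) ^ (-((k:ℝ) * β))) ^ t = ((2:ℝ) ^ (-(β * t))) ^ k := by
  rw [← Real.rpow_natCast ((2:ℝ) ^ (-(β * t))) k, ← Real.rpow_mul (by norm_num),
    ← Real.rpow_mul (by norm_num)]
  congr 1; ring


/-- `‖{2^{-α⟨s,γ'⟩}}_{s∈ϰ(n)}‖_{ℓ_τ̄} ≍ 2^{-nα} n^{Σ_{j=2}^ν 1/τ_j}`. -/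
theorem stmt1 (m ν : ℕ) (hν1 : 1 ≤ ν) (hνm : ν ≤ m + 1)
    (γ' : Fin (m + 1) → ℝ)
    (hγ1 : ∀ j : Fin (m + 1), (j : ℕ) < ν → γ' j = 1)
    (hγ2 : ∀ j : Fin (m + 1), ν ≤ (j : ℕ) → 1 < γ' j)
    (α : ℝ) (hα : 0 < α)
    (τ : Fin (m + 1) → ℝ) (hτ : ∀ j, 1 ≤ τ j) :
    ∃ C₁ C₂ : ℝ, 0 < C₁ ∧ 0 < C₂ ∧ ∀ n : ℕ, 1 ≤ n →
      C₁ * (2 : ℝ) ^ (-(n : ℝ) * α) *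
          (n : ℝ) ^ (∑ j ∈ Finset.univ.filter
            (fun j : Fin (m + 1) => 1 ≤ (j : ℕ) ∧ (j : ℕ) < ν), 1 / τ j) ≤
        mixedSeqNorm (m + 1) τ
          (fun s => if (∑ j, s j) = n then
            (2 : ℝ) ^ (-(α * ∑ j, (s j : ℝ) * γ' j)) else 0) ∧
      mixedSeqNorm (m + 1) τ
          (fun s => if (∑ j, s j) = n then
            (2 : ℝ) ^ (-(α * ∑ j, (s j : ℝ) * γ' j)) else 0) ≤
        C₂ * (2 : ℝ) ^ (-(n : ℝ) * α) *
          (n : ℝ) ^ (∑ j ∈ Finset.univ.filter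
            (fun j : Fin (m + 1) => 1 ≤ (j : ℕ) ∧ (j : ℕ) < ν), 1 / τ j) := by
  classical
  have hτpos : ∀ j : Fin (m+1), 0 < τ j := fun j => lt_of_lt_of_le one_pos (hτ j)
  have hτs : ∀ j : Fin m, 0 < τ j.succ := fun j => hτpos _
  have hν0 : 0 < ν := hν1
  have hτinv : ∀ j : Fin m, (0:ℝ) ≤ 1/τ j.succ := fun j => le_of_lt (by
    rw [one_div]; exact inv_pos.mpr (hτs j))
  have hγ'1 : γ' 0 = 1 := hγ1 0 (by simpa using hν0)
  set β : Fin (m+1) → ℝ := fun j => α * (γ' j - 1) with hβdef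
  have hβ0 : ∀ j, 0 ≤ β j := by
    intro j
    rcases lt_or_ge (j:ℕ) ν with h | h
    · simp [hβdef, hγ1 j h]
    · have := hγ2 j h; simp only [hβdef]; nlinarith
  have hβp : ∀ j : Fin (m+1), ν ≤ (j:ℕ) → 0 < β j := by
    intro j h; have := hγ2 j h; simp only [hβdef]; nlinarith
  have hβsucc0 : ∀ j : Fin m, (j:ℕ)+1 < ν → β j.succ = 0 := by
    intro j hj
    have : γ' j.succ = 1 := hγ1 j.succ (by simpa [Fin.val_succ] using hj)
    simp [hβdef, this]
  have hβsuccp : ∀ j : Fin m, ¬((j:ℕ)+1 < ν) → 0 < β j.succ := by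
    intro j hj
    exact hβp j.succ (by simp only [Fin.val_succ]; omega)
  have hβ00 : β 0 = 0 := by simp [hβdef, hγ'1]
  -- constants
  set C₂ : ℝ := ∏ j : Fin m, (if (j:ℕ)+1 < ν then (2:ℝ)
      else (∑' k : ℕ, ((2:ℝ) ^ (-(β j.succ * τ j.succ))) ^ k) ^ (1/τ j.succ)) with hC₂
  set C₁ : ℝ := ∏ j : Fin m, (if (j:ℕ)+1 < ν then ((ν:ℝ)) ^ (-(1/τ j.succ)) else (1:ℝ))
    with hC₁
  have hr : ∀ j : Fin m, ¬((j:ℕ)+1 < ν) → (0:ℝ) ≤ 2 ^ (-(β j.succ * τ j.succ)) ∧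
      (2:ℝ) ^ (-(β j.succ * τ j.succ)) < 1 := by
    intro j hj
    refine ⟨by positivity, ?_⟩
    apply Real.rpow_lt_one_of_one_lt_of_neg one_lt_two
    nlinarith [hβsuccp j hj, hτs j]
  have hgeo_sum : ∀ j : Fin m, ¬((j:ℕ)+1 < ν) →
      1 ≤ ∑' k : ℕ, ((2:ℝ) ^ (-(β j.succ * τ j.succ))) ^ k := by
    intro j hj
    have hs := summable_geometric_of_lt_one (hr j hj).1 (hr j hj).2
    have := Summable.le_tsum hs 0 (fun k _ => by positivity)
    simpa using this
  have hC₂pos : 0 < C₂ := by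
    rw [hC₂]; apply Finset.prod_pos; intro j _
    split
    · norm_num
    · next hj => exact Real.rpow_pos_of_pos (lt_of_lt_of_le one_pos (hgeo_sum j hj)) _
  have hC₁pos : 0 < C₁ := by
    rw [hC₁]; apply Finset.prod_pos; intro j _
    split
    · exact Real.rpow_pos_of_pos (by exact_mod_cast hν0) _
    · norm_num
  refine ⟨C₁, C₂, hC₁pos, hC₂pos, ?_⟩
  intro n hn
  have hn1 : (1:ℝ) ≤ (n:ℝ) := by exact_mod_cast hn
  have hnpos : (0:ℝ) < n := lt_of_lt_of_le one_pos hn1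
  have hE : (∑ j ∈ Finset.univ.filter
        (fun j : Fin (m+1) => 1 ≤ (j:ℕ) ∧ (j:ℕ) < ν), 1/τ j)
      = ∑ j ∈ Finset.univ.filter (fun j : Fin m => (j:ℕ)+1 < ν), 1/τ j.succ := by
    rw [Finset.sum_filter, Finset.sum_filter, Fin.sum_univ_succ]
    simp [Fin.val_succ]
  set a : (Fin (m+1) → ℕ) → ℝ := fun s => if (∑ j, s j) = n then
      (2 : ℝ) ^ (-(α * ∑ j, (s j : ℝ) * γ' j)) else 0 with hadef
  have hEXP : ∀ w : Fin (m+1) → ℕ, (∑ j, w j) = n →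
      -(α * ∑ j, (w j:ℝ) * γ' j) = (-(n:ℝ)*α) + ∑ j, -((w j:ℝ) * β j) := by
    intro w hw
    have hwr : (∑ j, (w j:ℝ)) = (n:ℝ) := by exact_mod_cast hw
    have e1 : ∑ j, (w j:ℝ) * γ' j = (n:ℝ) + ∑ j, (w j:ℝ) * (γ' j - 1) := by
      rw [← hwr, ← Finset.sum_add_distrib]
      exact Finset.sum_congr rfl fun j _ => by ring
    have e2 : ∑ j, -((w j:ℝ) * β j) = -(α * ∑ j, (w j:ℝ) * (γ' j - 1)) := by
      rw [Finset.mul_sum, ← Finset.sum_neg_distrib]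
      exact Finset.sum_congr rfl fun j _ => by simp only [hβdef]; ring
    rw [e1, e2]; ring
  have hval : ∀ w : Fin (m+1) → ℕ, (∑ j, w j) = n →
      (2:ℝ) ^ (-(α * ∑ j, (w j:ℝ) * γ' j)) =
        (2:ℝ) ^ (-(n:ℝ)*α) * ∏ j : Fin (m+1), (2:ℝ) ^ (-((w j:ℝ) * β j)) := by
    intro w hw
    rw [hEXP w hw, Real.rpow_add two_pos, rpow_fsum Finset.univ two_pos]
  -- UPPER BOUND
  set g : Fin m → ℕ → ℝ := fun j k => if (j:ℕ)+1 < ν then (if k ≤ n then (1:ℝ) else 0)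
      else (2:ℝ) ^ (-((k:ℝ) * β j.succ)) with hgdef
  have hgnn : ∀ j k, 0 ≤ g j k := by
    intro j k; rw [hgdef]; dsimp only
    split
    · split <;> norm_num
    · positivity
  have hgsum : ∀ j : Fin m, Summable fun k => g j k ^ τ j.succ := by
    intro j
    by_cases hj : (j:ℕ)+1 < ν
    · apply summable_of_ne_finset_zero (s := Finset.range (n+1))
      intro k hk
      simp only [Finset.mem_range] at hk
      rw [hgdef]; dsimp only
      rw [if_pos hj, if_neg (by omega), Real.zero_rpow (ne_of_gt (hτs j))]
    · have hsg := summable_geometric_of_lt_one (hr j hj).1 (hr j hj).2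
      apply hsg.congr
      intro k
      rw [hgdef]; dsimp only
      rw [if_neg hj]
      exact (geom_rpow _ _ k).symm
  have hupper : mixedSeqNorm (m+1) τ a ≤ C₂ * (2:ℝ) ^ (-(n:ℝ)*α) *
      (n:ℝ) ^ (∑ j ∈ Finset.univ.filter (fun j : Fin m => (j:ℕ)+1 < ν), 1/τ j.succ) := by
    rw [mixedSeqNorm]
    refine le_trans (mixedSeqNorm_le m (fun j => τ j.succ) hτs _
      ((2:ℝ) ^ (-(n:ℝ)*α)) (by positivity) g hgnn hgsum ?_) ?_
    · -- pointwise bound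
      intro s
      have hA0 : (0:ℝ) ≤ (∑' k : ℕ, |a (Fin.cons k s)| ^ τ 0) ^ (1/τ 0) := by
        apply Real.rpow_nonneg
        exact tsum_nonneg fun k => Real.rpow_nonneg (abs_nonneg _) _
      rw [abs_of_nonneg hA0]
      have hRnn : (0:ℝ) ≤ (2:ℝ) ^ (-(n:ℝ)*α) * ∏ j, g j (s j) :=
        mul_nonneg (by positivity) (Finset.prod_nonneg fun j _ => hgnn j _)
      by_cases hσ : (∑ j, s j) ≤ n
      · set k₀ := n - (∑ j, s j) with hk₀
        have hsum0 : (∑ j, (Fin.cons k₀ s : Fin (m+1) → ℕ) j) = n := by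
          rw [Fin.sum_cons]; omega
        have hone : ∀ k : ℕ, k ≠ k₀ → |a (Fin.cons k s)| ^ τ 0 = 0 := by
          intro k hk
          have : a (Fin.cons k s) = 0 := by
            rw [hadef]; dsimp only
            rw [if_neg (by rw [Fin.sum_cons]; omega)]
          rw [this, abs_zero, Real.zero_rpow (ne_of_gt (hτpos 0))]
        rw [tsum_eq_single k₀ hone,
          abs_of_nonneg (by rw [hadef]; dsimp only; split <;> positivity),
          rpow_rpow_inv' (by rw [hadef]; dsimp only; split <;> positivity)
            (ne_of_gt (hτpos 0))]
        rw [hadef]; dsimp only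
        rw [if_pos hsum0, hval _ hsum0]
        apply mul_le_mul_of_nonneg_left _ (by positivity)
        rw [Fin.prod_univ_succ]
        simp only [Fin.cons_zero, Fin.cons_succ]
        rw [hβ00, mul_zero, neg_zero, Real.rpow_zero, one_mul]
        apply Finset.prod_le_prod (fun j _ => by positivity)
        intro j _
        rw [hgdef]; dsimp only
        by_cases hj : (j:ℕ)+1 < ν
        · rw [if_pos hj, hβsucc0 j hj, mul_zero, neg_zero, Real.rpow_zero]
          have : s j ≤ n :=
            le_trans (Finset.single_le_sum (fun i _ => Nat.zero_le (s i))
              (Finset.mem_univ j)) hσ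
          rw [if_pos this]
        · rw [if_neg hj]
      · have hz : ∀ k : ℕ, |a (Fin.cons k s)| ^ τ 0 = 0 := by
          intro k
          have : a (Fin.cons k s) = 0 := by
            rw [hadef]; dsimp only
            rw [if_neg (by rw [Fin.sum_cons]; omega)]
          rw [this, abs_zero, Real.zero_rpow (ne_of_gt (hτpos 0))]
        rw [tsum_congr hz, tsum_zero, Real.zero_rpow (by
          simp only [one_div, ne_eq, inv_eq_zero]; exact ne_of_gt (hτpos 0))]
        exact hRnn
    · -- numerics
      have hper : ∀ j : Fin m, (∑' k, g j k ^ τ j.succ) ^ (1/τ j.succ) ≤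
          (if (j:ℕ)+1 < ν then (2:ℝ)
            else (∑' k : ℕ, ((2:ℝ) ^ (-(β j.succ * τ j.succ))) ^ k) ^ (1/τ j.succ))
          * (if (j:ℕ)+1 < ν then (n:ℝ) ^ (1/τ j.succ) else 1) := by
        intro j
        by_cases hj : (j:ℕ)+1 < ν
        · rw [if_pos hj, if_pos hj]
          have hck : ∀ k : ℕ, g j k ^ τ j.succ = (if k ≤ n then (1:ℝ) else 0) ^ τ j.succ := by
            intro k; simp only [hgdef]; rw [if_pos hj]
          have htc : (∑' k, g j k ^ τ j.succ) = ((n+1:ℕ):ℝ) := by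
            rw [tsum_congr hck]
            exact tsum_ind_le n (τ j.succ) (ne_of_gt (hτs j))
          rw [htc]
          calc ((n+1:ℕ):ℝ) ^ (1/τ j.succ) ≤ ((2:ℝ)*n) ^ (1/τ j.succ) :=
                Real.rpow_le_rpow (by positivity) (by push_cast; linarith) (hτinv j)
            _ = (2:ℝ)^(1/τ j.succ) * (n:ℝ)^(1/τ j.succ) :=
                Real.mul_rpow (by norm_num) (le_of_lt hnpos)
            _ ≤ 2 * (n:ℝ)^(1/τ j.succ) := by
                apply mul_le_mul_of_nonneg_right _ (Real.rpow_nonneg (le_of_lt hnpos) _)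
                calc (2:ℝ)^(1/τ j.succ) ≤ (2:ℝ)^(1:ℝ) :=
                      Real.rpow_le_rpow_of_exponent_le one_le_two
                        (by rw [div_le_one (hτs j)]; exact hτ _)
                  _ = 2 := Real.rpow_one 2
        · rw [if_neg hj, if_neg hj, mul_one]
          apply le_of_eq
          congr 1
          exact tsum_congr fun k => by
            rw [hgdef]; dsimp only; rw [if_neg hj]; exact geom_rpow _ _ k
      calc (2:ℝ)^(-(n:ℝ)*α) * ∏ j : Fin m, (∑' k, g j k ^ τ j.succ)^(1/τ j.succ)
          ≤ (2:ℝ)^(-(n:ℝ)*α) * ∏ j : Fin m,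
            ((if (j:ℕ)+1 < ν then (2:ℝ)
              else (∑' k : ℕ, ((2:ℝ) ^ (-(β j.succ * τ j.succ))) ^ k) ^ (1/τ j.succ))
            * (if (j:ℕ)+1 < ν then (n:ℝ) ^ (1/τ j.succ) else 1)) := by
            apply mul_le_mul_of_nonneg_left _ (by positivity)
            apply Finset.prod_le_prod (fun j _ =>
              Real.rpow_nonneg (tsum_nonneg fun k => Real.rpow_nonneg (hgnn j k) _) _)
              (fun j _ => hper j)
        _ = C₂ * (2:ℝ)^(-(n:ℝ)*α) * (n:ℝ) ^
            (∑ j ∈ Finset.univ.filter (fun j : Fin m => (j:ℕ)+1 < ν), 1/τ j.succ) := by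
            rw [Finset.prod_mul_distrib, ← hC₂,
              show (∏ j : Fin m, (if (j:ℕ)+1 < ν then (n:ℝ) ^ (1/τ j.succ) else 1)) =
                (n:ℝ) ^ (∑ j ∈ Finset.univ.filter
                  (fun j : Fin m => (j:ℕ)+1 < ν), 1/τ j.succ) from by
                rw [← Finset.prod_filter, ← rpow_fsum _ hnpos]]
            ring
  -- LOWER BOUND
  set h : Fin m → ℕ → ℝ := fun j k => if (j:ℕ)+1 < ν then
      (if k ≤ n / ν then (1:ℝ) else 0) else (if k = 0 then (1:ℝ) else 0) with hhdef
  have hhnn : ∀ j k, 0 ≤ h j k := by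
    intro j k; rw [hhdef]; dsimp only
    split <;> split <;> norm_num
  have hhsum : ∀ j : Fin m, Summable fun k => h j k ^ τ j.succ := by
    intro j
    apply summable_of_ne_finset_zero (s := Finset.range (n/ν + 1))
    intro k hk
    simp only [Finset.mem_range] at hk
    rw [hhdef]; dsimp only
    by_cases hj : (j:ℕ)+1 < ν
    · rw [if_pos hj, if_neg (fun hle => hk (Nat.lt_succ_of_le hle)),
        Real.zero_rpow (ne_of_gt (hτs j))]
    · rw [if_neg hj, if_neg (fun h0 => hk (by simp [h0])),
        Real.zero_rpow (ne_of_gt (hτs j))]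
  have hprodB := mixedSeqNorm_prod m (fun j => τ j.succ) hτs
      ((2:ℝ) ^ (-(n:ℝ)*α)) (by positivity) h hhnn hhsum
  have hcard : (Finset.univ.filter (fun j : Fin m => (j:ℕ)+1 < ν)).card ≤ ν := by
    have h1 : ∀ j ∈ Finset.univ.filter (fun j : Fin m => (j:ℕ)+1 < ν),
        (j:ℕ) ∈ Finset.range ν := by
      intro j hj
      simp only [Finset.mem_filter] at hj
      simp only [Finset.mem_range]; omega
    have := Finset.card_le_card_of_injOn (fun j : Fin m => (j:ℕ)) h1
      (fun x _ y _ hxy => Fin.val_injective hxy)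
    simpa using this
  have hmono : mixedSeqNorm m (fun j => τ j.succ)
        (fun s => (2:ℝ) ^ (-(n:ℝ)*α) * ∏ j, h j (s j))
      ≤ mixedSeqNorm m (fun j => τ j.succ)
        (fun s => (∑' k : ℕ, |a (Fin.cons k s)| ^ τ 0) ^ (1/τ 0)) := by
    apply mixedSeqNorm_mono m _ hτs
    · -- finite support
      refine Set.Finite.subset (Set.Finite.pi (fun _ : Fin m => Set.finite_Iic n)) ?_
      intro s hs
      simp only [Function.mem_support] at hs
      simp only [Set.mem_pi, Set.mem_univ, Set.mem_Iic, forall_const]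
      intro j
      by_contra hjn
      apply hs
      have hz : ∀ k : ℕ, |a (Fin.cons k s)| ^ τ 0 = 0 := by
        intro k
        have hsj : n < ∑ i, s i :=
          lt_of_lt_of_le (by omega : n < s j)
            (Finset.single_le_sum (fun i _ => Nat.zero_le (s i)) (Finset.mem_univ j))
        have : a (Fin.cons k s) = 0 := by
          rw [hadef]; dsimp only
          rw [if_neg (by rw [Fin.sum_cons]; omega)]
        rw [this, abs_zero, Real.zero_rpow (ne_of_gt (hτpos 0))]
      rw [tsum_congr hz, tsum_zero, Real.zero_rpow (by
        simp only [one_div, ne_eq, inv_eq_zero]; exact ne_of_gt (hτpos 0))]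
    · intro s
      exact mul_nonneg (by positivity) (Finset.prod_nonneg fun j _ => hhnn j _)
    · intro s
      by_cases hp : ∀ j : Fin m, ((j:ℕ)+1 < ν → s j ≤ n / ν) ∧
          (¬((j:ℕ)+1 < ν) → s j = 0)
      · have hprod1 : (∏ j, h j (s j)) = 1 := by
          apply Finset.prod_eq_one
          intro j _
          rw [hhdef]; dsimp only
          by_cases hj : (j:ℕ)+1 < ν
          · rw [if_pos hj, if_pos ((hp j).1 hj)]
          · rw [if_neg hj, if_pos ((hp j).2 hj)]
        have hσ : (∑ j, s j) ≤ n := by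
          calc ∑ j, s j ≤ ∑ j : Fin m, (if (j:ℕ)+1 < ν then n / ν else 0) := by
                apply Finset.sum_le_sum
                intro j _
                by_cases hj : (j:ℕ)+1 < ν
                · rw [if_pos hj]; exact (hp j).1 hj
                · rw [if_neg hj, (hp j).2 hj]
            _ = (Finset.univ.filter (fun j : Fin m => (j:ℕ)+1 < ν)).card * (n / ν) := by
                rw [← Finset.sum_filter, Finset.sum_const, smul_eq_mul]
            _ ≤ ν * (n / ν) := Nat.mul_le_mul_right _ hcard
            _ = n / ν * ν := mul_comm _ _
            _ ≤ n := Nat.div_mul_le_self n ν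
        set k₀ := n - (∑ j, s j) with hk₀
        have hsum0 : (∑ j, (Fin.cons k₀ s : Fin (m+1) → ℕ) j) = n := by
          rw [Fin.sum_cons]; omega
        have hone : ∀ k : ℕ, k ≠ k₀ → |a (Fin.cons k s)| ^ τ 0 = 0 := by
          intro k hk
          have : a (Fin.cons k s) = 0 := by
            rw [hadef]; dsimp only
            rw [if_neg (by rw [Fin.sum_cons]; omega)]
          rw [this, abs_zero, Real.zero_rpow (ne_of_gt (hτpos 0))]
        have hγcons : (∑ j, ((Fin.cons k₀ s : Fin (m+1) → ℕ) j : ℝ) * γ' j) = (n:ℝ) := by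
          have hterm : ∀ j : Fin (m+1), ((Fin.cons k₀ s : Fin (m+1) → ℕ) j : ℝ) * γ' j
              = ((Fin.cons k₀ s : Fin (m+1) → ℕ) j : ℝ) := by
            intro j
            induction j using Fin.cases with
            | zero => rw [hγ'1, mul_one]
            | succ i =>
              by_cases hj : (i:ℕ)+1 < ν
              · rw [hγ1 i.succ (by simpa [Fin.val_succ] using hj), mul_one]
              · rw [Fin.cons_succ, (hp i).2 hj]; simp
          rw [Finset.sum_congr rfl (fun j _ => hterm j)]
          exact_mod_cast hsum0
        have hAval : (∑' k : ℕ, |a (Fin.cons k s)| ^ τ 0) ^ (1/τ 0)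
            = (2:ℝ) ^ (-(n:ℝ)*α) := by
          rw [tsum_eq_single k₀ hone,
            abs_of_nonneg (by rw [hadef]; dsimp only; split <;> positivity),
            rpow_rpow_inv' (by rw [hadef]; dsimp only; split <;> positivity)
              (ne_of_gt (hτpos 0))]
          rw [hadef]; dsimp only
          rw [if_pos hsum0, hγcons]
          congr 1; ring
        rw [hprod1, mul_one, abs_of_nonneg (by rw [hAval]; positivity), hAval]
      · have : ∃ j : Fin m, h j (s j) = 0 := by
          by_contra hall
          push_neg at hall
          apply hp
          intro j
          have hj := hall j
          rw [hhdef] at hj; dsimp only at hj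
          constructor <;> intro hc
          · rw [if_pos hc] at hj
            by_contra hle
            rw [if_neg (by omega)] at hj
            exact hj rfl
          · rw [if_neg hc] at hj
            by_contra hne
            rw [if_neg hne] at hj
            exact hj rfl
        obtain ⟨j, hj0⟩ := this
        rw [Finset.prod_eq_zero (Finset.mem_univ j) hj0, mul_zero]
        exact abs_nonneg _
  have hlow : C₁ * (2:ℝ) ^ (-(n:ℝ)*α) * (n:ℝ) ^
      (∑ j ∈ Finset.univ.filter (fun j : Fin m => (j:ℕ)+1 < ν), 1/τ j.succ)
      ≤ (2:ℝ) ^ (-(n:ℝ)*α) * ∏ j : Fin m, (∑' k, h j k ^ τ j.succ) ^ (1/τ j.succ) := by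
    have hper : ∀ j : Fin m,
        (if (j:ℕ)+1 < ν then ((ν:ℝ)) ^ (-(1/τ j.succ)) else (1:ℝ))
        * (if (j:ℕ)+1 < ν then (n:ℝ) ^ (1/τ j.succ) else 1)
        ≤ (∑' k, h j k ^ τ j.succ) ^ (1/τ j.succ) := by
      intro j
      by_cases hj : (j:ℕ)+1 < ν
      · rw [if_pos hj, if_pos hj]
        have hck : ∀ k : ℕ, h j k ^ τ j.succ = (if k ≤ n/ν then (1:ℝ) else 0) ^ τ j.succ := by
          intro k; simp only [hhdef]; rw [if_pos hj]
        have htc : (∑' k, h j k ^ τ j.succ) = ((n/ν+1:ℕ):ℝ) := by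
          rw [tsum_congr hck]
          exact tsum_ind_le (n/ν) (τ j.succ) (ne_of_gt (hτs j))
        rw [htc]
        have hnlt : n < (n/ν + 1) * ν := by
          have h1 := Nat.div_add_mod n ν
          have h2 := Nat.mod_lt n hν0
          calc n = ν * (n/ν) + n % ν := h1.symm
            _ < ν * (n/ν) + ν := Nat.add_lt_add_left h2 _
            _ = (n/ν + 1) * ν := by ring
        have hdiv : (n:ℝ) / ν ≤ ((n/ν+1:ℕ):ℝ) := by
          rw [div_le_iff₀ (by exact_mod_cast hν0)]
          exact_mod_cast le_of_lt hnlt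
        calc ((ν:ℝ)) ^ (-(1/τ j.succ)) * (n:ℝ) ^ (1/τ j.succ)
            = ((n:ℝ)/ν) ^ (1/τ j.succ) := by
              rw [Real.div_rpow (le_of_lt hnpos) (by positivity),
                Real.rpow_neg (by positivity)]
              ring
          _ ≤ ((n/ν+1:ℕ):ℝ) ^ (1/τ j.succ) :=
              Real.rpow_le_rpow (by positivity) hdiv (hτinv j)
      · rw [if_neg hj, if_neg hj, mul_one]
        have hck : ∀ k : ℕ, h j k ^ τ j.succ = (if k = 0 then (1:ℝ) else 0) ^ τ j.succ := by
          intro k; simp only [hhdef]; rw [if_neg hj]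
        have htc : (∑' k, h j k ^ τ j.succ) = 1 := by
          rw [tsum_congr hck]
          exact tsum_ind0 (τ j.succ) (ne_of_gt (hτs j))
        rw [htc, Real.one_rpow]
    calc C₁ * (2:ℝ)^(-(n:ℝ)*α) * (n:ℝ) ^
        (∑ j ∈ Finset.univ.filter (fun j : Fin m => (j:ℕ)+1 < ν), 1/τ j.succ)
        = (2:ℝ)^(-(n:ℝ)*α) * ∏ j : Fin m,
          ((if (j:ℕ)+1 < ν then ((ν:ℝ)) ^ (-(1/τ j.succ)) else (1:ℝ))
          * (if (j:ℕ)+1 < ν then (n:ℝ) ^ (1/τ j.succ) else 1)) := by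
          rw [Finset.prod_mul_distrib, ← hC₁,
            show (∏ j : Fin m, (if (j:ℕ)+1 < ν then (n:ℝ) ^ (1/τ j.succ) else 1)) =
              (n:ℝ) ^ (∑ j ∈ Finset.univ.filter
                (fun j : Fin m => (j:ℕ)+1 < ν), 1/τ j.succ) from by
              rw [← Finset.prod_filter, ← rpow_fsum _ hnpos]]
          ring
      _ ≤ (2:ℝ)^(-(n:ℝ)*α) * ∏ j : Fin m, (∑' k, h j k ^ τ j.succ) ^ (1/τ j.succ) := by
          apply mul_le_mul_of_nonneg_left _ (by positivity)
          apply Finset.prod_le_prod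
          · intro j _
            apply mul_nonneg
            · split <;> positivity
            · split <;> positivity
          · intro j _; exact hper j
  constructor
  · rw [hE, mixedSeqNorm]
    calc C₁ * (2:ℝ)^(-(n:ℝ)*α) * (n:ℝ) ^
        (∑ j ∈ Finset.univ.filter (fun j : Fin m => (j:ℕ)+1 < ν), 1/τ j.succ)
        ≤ (2:ℝ)^(-(n:ℝ)*α) * ∏ j : Fin m, (∑' k, h j k ^ τ j.succ) ^ (1/τ j.succ) := hlow
      _ = mixedSeqNorm m (fun j => τ j.succ)
          (fun s => (2:ℝ)^(-(n:ℝ)*α) * ∏ j, h j (s j)) := hprodB.symm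
      _ ≤ mixedSeqNorm m (fun j => τ j.succ)
          (fun s => (∑' k : ℕ, |a (Fin.cons k s)| ^ τ 0) ^ (1/τ 0)) := hmono
  · rw [hE]
    exact hupper
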